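/- arXiv:1911.04377 — 2 statements merged into one kernel-verified Lean document; each statement's English description precedes it below -/
import Mathlib

section
/- Let $\alpha:\mathcal{Y}\to[0,1)$ be measurable and $(Y_t)_{t\in\mathbb{Z}}$ strongly stationary. Suppose there exists $0<\theta<1$ with $\lim_{n\to\infty}\mathbb{E}[\alpha(Y_0)^n]^{1/n^{\theta}}=0$. Then for every integer $M\ge 1$ and every $1\le p<\infty$, $\sum_{N=1}^{\infty}\big\| \max_{0\le k<\lfloor N^{1/M}\rfloor^M}\alpha(Y_k)^{\lfloor N^{1/M}\rfloor -1}\big\|_{p} < \infty$, where $\|\cdot\|_p$ denotes the $L^p$ norm. -/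
open MeasureTheory
open scoped ENNReal

/-- Auxiliary: eventually `D * log m ≤ c * m ^ θ` along `ℕ`. -/
lemma aux_log_le_rpow (D c θ : ℝ) (hc : 0 < c) (hθ : 0 < θ) :
    ∀ᶠ m : ℕ in Filter.atTop, D * Real.log m ≤ c * (m : ℝ) ^ θ := by
  have h2 := ((isLittleO_log_rpow_atTop hθ).const_mul_left D).def hc
  have h3 : ∀ᶠ m : ℕ in Filter.atTop, ‖D * Real.log (m : ℝ)‖ ≤ c * ‖(m : ℝ) ^ θ‖ :=
    tendsto_natCast_atTop_atTop.eventually h2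
  filter_upwards [h3, Filter.eventually_ge_atTop 1] with n h hn
  have hn' : (1 : ℝ) ≤ (n : ℝ) := by exact_mod_cast hn
  have hnn : (0 : ℝ) ≤ (n : ℝ) ^ θ := Real.rpow_nonneg (by linarith) _
  calc D * Real.log n ≤ ‖D * Real.log (n : ℝ)‖ := by
        rw [Real.norm_eq_abs]; exact le_abs_self _
    _ ≤ c * ‖(n : ℝ) ^ θ‖ := h
    _ = c * (n : ℝ) ^ θ := by rw [Real.norm_of_nonneg hnn]

/-- Lemma 6.8: under the smallness condition, the `L^p` norms of
`max_{0 ≤ k < ⌊N^{1/M}⌋^M} α(Y_k)^{⌊N^{1/M}⌋ - 1}` are summable over `N`. -/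
theorem smallness_max_summable
    {Ω 𝒴 : Type*} [MeasurableSpace Ω] [MeasurableSpace 𝒴]
    (ℙ : Measure Ω) [IsProbabilityMeasure ℙ]
    (Y : ℤ → Ω → 𝒴) (hYmeas : ∀ t, Measurable (Y t))
    (hstat : ∀ k : ℤ, Measure.map (fun ω => fun t : ℤ => Y (t + k) ω) ℙ
      = Measure.map (fun ω => fun t : ℤ => Y t ω) ℙ)
    (α : 𝒴 → ℝ) (hαmeas : Measurable α) (hα0 : ∀ y, 0 ≤ α y) (hα1 : ∀ y, α y < 1)
    (θ : ℝ) (hθ0 : 0 < θ) (hθ1 : θ < 1)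
    (hsmall : Filter.Tendsto
      (fun n : ℕ => (∫ ω, (α (Y 0 ω)) ^ n ∂ℙ) ^ ((1 : ℝ) / (n : ℝ) ^ θ))
      Filter.atTop (nhds 0))
    (M : ℕ) (hM : 1 ≤ M) (p : ℝ≥0∞) (hp : 1 ≤ p) (hp' : p ≠ ∞) :
    ∑' N : ℕ,
      eLpNorm (fun ω =>
        ⨆ k : Fin ((⌊(N : ℝ) ^ ((1 : ℝ) / M)⌋₊) ^ M),
          (α (Y (k : ℕ) ω)) ^ (⌊(N : ℝ) ^ ((1 : ℝ) / M)⌋₊ - 1)) p ℙ ≠ ∞ := by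
  classical
  set q : ℝ := p.toReal with hq_def
  have hp0 : p ≠ 0 := (lt_of_lt_of_le zero_lt_one hp).ne'
  have hq1 : 1 ≤ q := by
    have := ENNReal.toReal_mono hp' hp
    simpa using this
  have hq0 : 0 < q := lt_of_lt_of_le zero_lt_one hq1
  set m : ℕ → ℕ := fun N => ⌊(N : ℝ) ^ ((1 : ℝ) / M)⌋₊ with hm_def
  set f : ℕ → Ω → ℝ := fun N ω =>
      ⨆ k : Fin ((m N) ^ M), (α (Y (k : ℕ) ω)) ^ (m N - 1) with hf_def
  set a : ℕ → ℝ≥0∞ := fun N => eLpNorm (f N) p ℙ with ha_def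
  -- basic bounds on f
  have hf_nonneg : ∀ N ω, 0 ≤ f N ω := fun N ω =>
    Real.iSup_nonneg fun k => pow_nonneg (hα0 _) _
  have hf_le_one : ∀ N ω, f N ω ≤ 1 := fun N ω =>
    Real.iSup_le (fun k => pow_le_one₀ (hα0 _) (hα1 _).le) zero_le_one
  -- a N ≤ 1 always
  have ha_le_one : ∀ N, a N ≤ 1 := by
    intro N
    have hb : ∀ᵐ ω ∂ℙ, ‖f N ω‖ ≤ (1 : ℝ) := by
      filter_upwards with ω
      rw [Real.norm_of_nonneg (hf_nonneg N ω)]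
      exact hf_le_one N ω
    have := eLpNorm_le_of_ae_bound (p := p) (μ := ℙ) hb
    simpa using this
  -- stationarity of marginals
  have hmap : ∀ k : ℤ, Measure.map (Y k) ℙ = Measure.map (Y 0) ℙ := by
    intro k
    have hF : Measurable (fun ω => fun t : ℤ => Y (t + k) ω) :=
      measurable_pi_lambda _ fun t => hYmeas _
    have hG : Measurable (fun ω => fun t : ℤ => Y t ω) :=
      measurable_pi_lambda _ fun t => hYmeas _
    have h0 := congrArg (Measure.map (fun g : ℤ → 𝒴 => g 0)) (hstat k)
    rw [Measure.map_map (measurable_pi_apply 0) hF,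
        Measure.map_map (measurable_pi_apply 0) hG] at h0
    simpa [Function.comp_def] using h0
  -- equal lintegrals of powers
  set J : ℕ → ℝ≥0∞ := fun e => ∫⁻ ω, ENNReal.ofReal ((α (Y 0 ω)) ^ e) ∂ℙ with hJ_def
  have hJk : ∀ (k : ℤ) (e : ℕ),
      ∫⁻ ω, ENNReal.ofReal ((α (Y k ω)) ^ e) ∂ℙ = J e := by
    intro k e
    have hg : Measurable fun y => ENNReal.ofReal ((α y) ^ e) :=
      (hαmeas.pow_const e).ennreal_ofReal
    calc ∫⁻ ω, ENNReal.ofReal ((α (Y k ω)) ^ e) ∂ℙ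
        = ∫⁻ y, ENNReal.ofReal ((α y) ^ e) ∂(Measure.map (Y k) ℙ) :=
          (lintegral_map hg (hYmeas k)).symm
      _ = ∫⁻ y, ENNReal.ofReal ((α y) ^ e) ∂(Measure.map (Y 0) ℙ) := by rw [hmap k]
      _ = J e := lintegral_map hg (hYmeas 0)
  -- J in terms of the Bochner integral
  have hInt : ∀ n : ℕ, Integrable (fun ω => (α (Y 0 ω)) ^ n) ℙ := by
    intro n
    refine (integrable_const (1 : ℝ)).mono'
      ((hαmeas.comp (hYmeas 0)).pow_const n).aestronglyMeasurable ?_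
    filter_upwards with ω
    rw [Real.norm_of_nonneg (pow_nonneg (hα0 _) _)]
    exact pow_le_one₀ (hα0 _) (hα1 _).le
  have hJI : ∀ n : ℕ, J n = ENNReal.ofReal (∫ ω, (α (Y 0 ω)) ^ n ∂ℙ) :=
    fun n => (ofReal_integral_eq_lintegral_ofReal (hInt n)
      (Filter.Eventually.of_forall fun ω => pow_nonneg (hα0 _) _)).symm
  -- smallness: eventually I n ≤ (1/2)^(n^θ)
  obtain ⟨n₀, hn₀⟩ : ∃ n₀ : ℕ, ∀ n ≥ n₀,
      (∫ ω, (α (Y 0 ω)) ^ n ∂ℙ) ^ ((1 : ℝ) / (n : ℝ) ^ θ) < 1 / 2 :=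
    Filter.eventually_atTop.mp (hsmall.eventually (gt_mem_nhds (by norm_num)))
  have hIbound : ∀ n : ℕ, n₀ ≤ n → 1 ≤ n →
      (∫ ω, (α (Y 0 ω)) ^ n ∂ℙ) ≤ (1 / 2 : ℝ) ^ ((n : ℝ) ^ θ) := by
    intro n hn hn1
    set I : ℝ := ∫ ω, (α (Y 0 ω)) ^ n ∂ℙ with hI_def
    have hI0 : 0 ≤ I := integral_nonneg fun ω => pow_nonneg (hα0 _) _
    have hc : (0 : ℝ) < (n : ℝ) ^ θ :=
      Real.rpow_pos_of_pos (by exact_mod_cast hn1) θ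
    have h1 : I ^ ((1 : ℝ) / (n : ℝ) ^ θ) ≤ 1 / 2 := (hn₀ n hn).le
    have h2 : (I ^ ((1 : ℝ) / (n : ℝ) ^ θ)) ^ ((n : ℝ) ^ θ)
        ≤ (1 / 2 : ℝ) ^ ((n : ℝ) ^ θ) :=
      Real.rpow_le_rpow (Real.rpow_nonneg hI0 _) h1 hc.le
    rwa [← Real.rpow_mul hI0, one_div, inv_mul_cancel₀ hc.ne', Real.rpow_one] at h2
  -- the main per-N estimate
  have hmain : ∀ N : ℕ, a N ≤ (((m N) ^ M : ℕ) * J (m N - 1)) ^ (1 / q) := by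
    intro N
    set n : ℕ := (m N) ^ M with hn_def
    set e : ℕ := m N - 1 with he_def
    have key : ∫⁻ ω, (‖f N ω‖₊ : ℝ≥0∞) ^ q ∂ℙ ≤ (n : ℝ≥0∞) * J e := by
      have hpt : ∀ ω, (‖f N ω‖₊ : ℝ≥0∞) ^ q
          ≤ ∑ k ∈ Finset.range n, ENNReal.ofReal ((α (Y k ω)) ^ e) := by
        intro ω
        have h1 : (‖f N ω‖₊ : ℝ≥0∞) = ENNReal.ofReal (f N ω) :=
          Real.enorm_eq_ofReal (hf_nonneg N ω)
        have hle1 : (‖f N ω‖₊ : ℝ≥0∞) ≤ 1 := by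
          rw [h1]
          exact ENNReal.ofReal_le_one.mpr (hf_le_one N ω)
        calc (‖f N ω‖₊ : ℝ≥0∞) ^ q ≤ (‖f N ω‖₊ : ℝ≥0∞) ^ (1 : ℝ) :=
              ENNReal.rpow_le_rpow_of_exponent_ge hle1 hq1
          _ = ENNReal.ofReal (f N ω) := by rw [ENNReal.rpow_one, h1]
          _ ≤ ENNReal.ofReal (∑ k ∈ Finset.range n, (α (Y k ω)) ^ e) := by
              apply ENNReal.ofReal_le_ofReal
              refine Real.iSup_le (fun k => ?_)
                (Finset.sum_nonneg fun i _ => pow_nonneg (hα0 _) _)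
              exact Finset.single_le_sum
                (f := fun i : ℕ => (α (Y (i : ℤ) ω)) ^ e)
                (fun i _ => pow_nonneg (hα0 _) _) (Finset.mem_range.mpr k.2)
          _ = ∑ k ∈ Finset.range n, ENNReal.ofReal ((α (Y k ω)) ^ e) :=
              ENNReal.ofReal_sum_of_nonneg fun i _ => pow_nonneg (hα0 _) _
      calc ∫⁻ ω, (‖f N ω‖₊ : ℝ≥0∞) ^ q ∂ℙ
          ≤ ∫⁻ ω, ∑ k ∈ Finset.range n, ENNReal.ofReal ((α (Y k ω)) ^ e) ∂ℙ :=
            lintegral_mono hpt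
        _ = ∑ k ∈ Finset.range n, ∫⁻ ω, ENNReal.ofReal ((α (Y k ω)) ^ e) ∂ℙ :=
            lintegral_finset_sum _ fun k _ =>
              ((hαmeas.comp (hYmeas k)).pow_const e).ennreal_ofReal
        _ = ∑ k ∈ Finset.range n, J e := Finset.sum_congr rfl fun k _ => hJk k e
        _ = (n : ℝ≥0∞) * J e := by
            rw [Finset.sum_const, Finset.card_range, nsmul_eq_mul]
    have hrw : a N = (∫⁻ ω, (‖f N ω‖₊ : ℝ≥0∞) ^ q ∂ℙ) ^ (1 / q) :=
      eLpNorm_eq_lintegral_rpow_enorm_toReal hp0 hp'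
    rw [hrw]
    exact ENNReal.rpow_le_rpow key (by positivity)
  -- m N → ∞
  have hm_tendsto : Filter.Tendsto m Filter.atTop Filter.atTop := by
    apply tendsto_nat_floor_atTop.comp
    exact (tendsto_rpow_atTop (by positivity)).comp tendsto_natCast_atTop_atTop
  -- eventual smallness in m
  set D : ℝ := 2 * M * (1 + 2 * q) with hD_def
  have hlog := aux_log_le_rpow D ((2 : ℝ) ^ (-θ) * Real.log 2) θ
    (by positivity) hθ0
  obtain ⟨m₁, hm₁⟩ := Filter.eventually_atTop.mp hlog
  set m₂ : ℕ := max (max m₁ (n₀ + 2)) 2 with hm₂_def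
  obtain ⟨N₁, hN₁⟩ := Filter.eventually_atTop.mp (hm_tendsto.eventually_ge_atTop m₂)
  -- the eventual bound a N ≤ ofReal (1/(N+1)^2)
  have hbound : ∀ N ≥ N₁, a N ≤ ENNReal.ofReal (1 / ((N : ℝ) + 1) ^ 2) := by
    intro N hN
    have hmm : m₂ ≤ m N := hN₁ N hN
    have hmm2 : 2 ≤ m N := le_trans (le_max_right _ _) hmm
    have hmmn₀ : n₀ + 2 ≤ m N :=
      le_trans (le_trans (le_max_right _ _) (le_max_left _ _)) hmm
    have hmm₁ : m₁ ≤ m N :=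
      le_trans (le_trans (le_max_left _ _) (le_max_left _ _)) hmm
    set mm : ℕ := m N with hmm_def
    set e : ℕ := mm - 1 with he_def
    have he1 : 1 ≤ e := by omega
    have hen₀ : n₀ ≤ e := by omega
    have hmmR : (2 : ℝ) ≤ (mm : ℝ) := by exact_mod_cast hmm2
    have hmmpos : (0 : ℝ) < mm := by linarith
    -- floor inequalities
    have hfloor_le : (mm : ℝ) ≤ (N : ℝ) ^ ((1 : ℝ) / M) :=
      Nat.floor_le (Real.rpow_nonneg (Nat.cast_nonneg N) _)
    have hfloor_gt : (N : ℝ) ^ ((1 : ℝ) / M) < (mm : ℝ) + 1 := Nat.lt_floor_add_one _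
    have hM0 : (M : ℝ) ≠ 0 := Nat.cast_ne_zero.mpr (by omega)
    have hMR : ((1 : ℝ) / M) * M = 1 := by field_simp
    have hNrw : ((N : ℝ) ^ ((1 : ℝ) / M)) ^ (M : ℕ) = (N : ℝ) := by
      rw [← Real.rpow_natCast ((N : ℝ) ^ ((1 : ℝ) / M)) M,
        ← Real.rpow_mul (Nat.cast_nonneg N), hMR, Real.rpow_one]
    have hn_le_N : ((mm ^ M : ℕ) : ℝ) ≤ (N : ℝ) := by
      push_cast
      calc (mm : ℝ) ^ M ≤ ((N : ℝ) ^ ((1 : ℝ) / M)) ^ (M : ℕ) :=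
            pow_le_pow_left₀ (by positivity) hfloor_le M
        _ = (N : ℝ) := hNrw
    have hN_lt : (N : ℝ) < ((mm : ℝ) + 1) ^ (M : ℕ) := by
      calc (N : ℝ) = ((N : ℝ) ^ ((1 : ℝ) / M)) ^ (M : ℕ) := hNrw.symm
        _ < ((mm : ℝ) + 1) ^ (M : ℕ) :=
            pow_lt_pow_left₀ hfloor_gt (by positivity) (by omega)
    have hN1_le : (N : ℝ) + 1 ≤ (mm : ℝ) ^ (2 * M) := by
      have h1 : (mm : ℝ) + 1 ≤ (mm : ℝ) ^ 2 := by nlinarith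
      have h2 : ((mm : ℝ) + 1) ^ (M : ℕ) ≤ ((mm : ℝ) ^ 2) ^ (M : ℕ) :=
        pow_le_pow_left₀ (by positivity) h1 M
      have h3 : (N : ℝ) + 1 ≤ ((mm : ℝ) + 1) ^ (M : ℕ) := by
        have hnat : N < (mm + 1) ^ M := by
          have := hN_lt
          push_cast at this
          exact_mod_cast this
        have hnat1 : N + 1 ≤ (mm + 1) ^ M := hnat
        exact_mod_cast hnat1
      calc (N : ℝ) + 1 ≤ ((mm : ℝ) ^ 2) ^ (M : ℕ) := le_trans h3 h2
        _ = (mm : ℝ) ^ (2 * M) := by rw [← pow_mul]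
    -- the key real inequality
    set x : ℝ := (N : ℝ) + 1 with hx_def
    have hx0 : (0 : ℝ) < x := by positivity
    have heR : (mm : ℝ) / 2 ≤ (e : ℝ) := by
      have he' : (e : ℝ) = (mm : ℝ) - 1 := by
        rw [he_def, Nat.cast_sub (by omega)]; norm_num
      rw [he']; linarith
    have hrpow_e : (2 : ℝ) ^ (-θ) * (mm : ℝ) ^ θ ≤ (e : ℝ) ^ θ := by
      have h1 : ((mm : ℝ) / 2) ^ θ ≤ (e : ℝ) ^ θ :=
        Real.rpow_le_rpow (by positivity) heR hθ0.le
      calc (2 : ℝ) ^ (-θ) * (mm : ℝ) ^ θ = ((mm : ℝ) / 2) ^ θ := by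
            rw [Real.div_rpow (by positivity) (by norm_num), Real.rpow_neg (by norm_num)]
            ring
        _ ≤ (e : ℝ) ^ θ := h1
    have hlogmm : D * Real.log mm ≤ (2 : ℝ) ^ (-θ) * Real.log 2 * (mm : ℝ) ^ θ :=
      hm₁ mm hmm₁
    have hH : x ^ ((1 : ℝ) + 2 * q) ≤ (2 : ℝ) ^ ((e : ℝ) ^ θ) := by
      have hx_le : x ≤ (mm : ℝ) ^ (2 * M : ℕ) := hN1_le
      have h1 : x ^ ((1 : ℝ) + 2 * q) ≤ ((mm : ℝ) ^ (2 * M : ℕ)) ^ ((1 : ℝ) + 2 * q) :=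
        Real.rpow_le_rpow hx0.le hx_le (by positivity)
      have h2 : ((mm : ℝ) ^ (2 * M : ℕ)) ^ ((1 : ℝ) + 2 * q)
          = (mm : ℝ) ^ (((2 * M : ℕ) : ℝ) * ((1 : ℝ) + 2 * q)) := by
        rw [← Real.rpow_natCast (mm : ℝ) (2 * M), ← Real.rpow_mul hmmpos.le]
      have h3 : (mm : ℝ) ^ (((2 * M : ℕ) : ℝ) * ((1 : ℝ) + 2 * q))
          ≤ (2 : ℝ) ^ ((e : ℝ) ^ θ) := by
        rw [Real.rpow_def_of_pos hmmpos, Real.rpow_def_of_pos (by norm_num : (0 : ℝ) < 2)]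
        apply Real.exp_le_exp.mpr
        have hDrw : Real.log mm * (((2 * M : ℕ) : ℝ) * ((1 : ℝ) + 2 * q))
            = D * Real.log mm := by
          rw [hD_def]; push_cast; ring
        rw [hDrw]
        calc D * Real.log mm ≤ (2 : ℝ) ^ (-θ) * Real.log 2 * (mm : ℝ) ^ θ := hlogmm
          _ = Real.log 2 * ((2 : ℝ) ^ (-θ) * (mm : ℝ) ^ θ) := by ring
          _ ≤ Real.log 2 * ((e : ℝ) ^ θ) :=
              mul_le_mul_of_nonneg_left hrpow_e (Real.log_nonneg (by norm_num))
      calc x ^ ((1 : ℝ) + 2 * q) ≤ ((mm : ℝ) ^ (2 * M : ℕ)) ^ ((1 : ℝ) + 2 * q) := h1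
        _ = (mm : ℝ) ^ (((2 * M : ℕ) : ℝ) * ((1 : ℝ) + 2 * q)) := h2
        _ ≤ (2 : ℝ) ^ ((e : ℝ) ^ θ) := h3
    -- real inequality: N * (1/2)^(e^θ) ≤ (1/x^2)^q
    have hreal : (N : ℝ) * (1 / 2 : ℝ) ^ ((e : ℝ) ^ θ) ≤ (1 / x ^ 2) ^ q := by
      have h2e : (0 : ℝ) < (2 : ℝ) ^ ((e : ℝ) ^ θ) := Real.rpow_pos_of_pos (by norm_num) _
      have hhalf : (1 / 2 : ℝ) ^ ((e : ℝ) ^ θ) = ((2 : ℝ) ^ ((e : ℝ) ^ θ))⁻¹ := by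
        rw [one_div, Real.inv_rpow (by norm_num)]
      have hx2 : (1 / x ^ 2 : ℝ) = x ^ (-(2 : ℝ)) := by
        rw [Real.rpow_neg hx0.le, one_div,
          show ((2 : ℝ)) = ((2 : ℕ) : ℝ) by norm_num, Real.rpow_natCast]
      have hrhs : (1 / x ^ 2 : ℝ) ^ q = x ^ (-(2 * q)) := by
        rw [hx2, ← Real.rpow_mul hx0.le]
        congr 1; ring
      rw [hhalf, hrhs]
      have hxp : (0 : ℝ) < x ^ ((1 : ℝ) + 2 * q) := Real.rpow_pos_of_pos hx0 _
      have step1 : (N : ℝ) * ((2 : ℝ) ^ ((e : ℝ) ^ θ))⁻¹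
          ≤ x * ((2 : ℝ) ^ ((e : ℝ) ^ θ))⁻¹ := by
        apply mul_le_mul_of_nonneg_right _ (by positivity)
        simp [hx_def]
      have step2 : x * ((2 : ℝ) ^ ((e : ℝ) ^ θ))⁻¹ ≤ x * (x ^ ((1 : ℝ) + 2 * q))⁻¹ := by
        apply mul_le_mul_of_nonneg_left _ hx0.le
        exact inv_anti₀ hxp hH
      have step3 : x * (x ^ ((1 : ℝ) + 2 * q))⁻¹ = x ^ (-(2 * q)) := by
        have hsplit : x ^ ((1 : ℝ) + 2 * q) = x * x ^ (2 * q) := by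
          rw [Real.rpow_add hx0, Real.rpow_one]
        rw [hsplit, mul_inv, ← mul_assoc, mul_inv_cancel₀ hx0.ne', one_mul,
          ← Real.rpow_neg hx0.le]
      calc (N : ℝ) * ((2 : ℝ) ^ ((e : ℝ) ^ θ))⁻¹
          ≤ x * ((2 : ℝ) ^ ((e : ℝ) ^ θ))⁻¹ := step1
        _ ≤ x * (x ^ ((1 : ℝ) + 2 * q))⁻¹ := step2
        _ = x ^ (-(2 * q)) := step3
    -- assemble
    set t : ℝ := (1 / 2 : ℝ) ^ ((e : ℝ) ^ θ) with ht_def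
    have ht0 : 0 ≤ t := by positivity
    have hJe : J e ≤ ENNReal.ofReal t := by
      rw [hJI e]
      exact ENNReal.ofReal_le_ofReal (hIbound e hen₀ he1)
    have h1 : a N ≤ (ENNReal.ofReal ((N : ℝ) * t)) ^ (1 / q) := by
      refine le_trans (hmain N) (ENNReal.rpow_le_rpow ?_ (by positivity))
      calc ((mm ^ M : ℕ) : ℝ≥0∞) * J e ≤ ((mm ^ M : ℕ) : ℝ≥0∞) * ENNReal.ofReal t := by
            gcongr
        _ = ENNReal.ofReal (((mm ^ M : ℕ) : ℝ) * t) := by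
            rw [ENNReal.ofReal_mul (Nat.cast_nonneg _), ENNReal.ofReal_natCast]
        _ ≤ ENNReal.ofReal ((N : ℝ) * t) :=
            ENNReal.ofReal_le_ofReal (mul_le_mul_of_nonneg_right hn_le_N ht0)
    have h2 : (ENNReal.ofReal ((N : ℝ) * t)) ^ (1 / q)
        = ENNReal.ofReal (((N : ℝ) * t) ^ (1 / q)) :=
      ENNReal.ofReal_rpow_of_nonneg (by positivity) (by positivity)
    have hrq : ((1 / x ^ 2 : ℝ) ^ q) ^ (1 / q) = 1 / x ^ 2 := by
      rw [← Real.rpow_mul (by positivity), mul_one_div_cancel hq0.ne', Real.rpow_one]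
    have h3 : ((N : ℝ) * t) ^ (1 / q) ≤ 1 / x ^ 2 := by
      have h := Real.rpow_le_rpow (by positivity) hreal (by positivity : (0 : ℝ) ≤ 1 / q)
      rwa [hrq] at h
    calc a N ≤ (ENNReal.ofReal ((N : ℝ) * t)) ^ (1 / q) := h1
      _ = ENNReal.ofReal (((N : ℝ) * t) ^ (1 / q)) := h2
      _ ≤ ENNReal.ofReal (1 / ((N : ℝ) + 1) ^ 2) := ENNReal.ofReal_le_ofReal h3
  -- summability of the dominating series
  have hsum2 : Summable (fun N : ℕ => 1 / ((N : ℝ) + 1) ^ 2) := by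
    have h0 : Summable (fun n : ℕ => 1 / (n : ℝ) ^ 2) :=
      Real.summable_one_div_nat_pow.mpr one_lt_two
    have h1 := (summable_nat_add_iff 1).mpr h0
    refine h1.congr fun n => ?_
    push_cast
    ring_nf
  set b : ℕ → ℝ≥0∞ := fun N => ENNReal.ofReal (1 / ((N : ℝ) + 1) ^ 2) with hb_def
  have hb_ne : (∑' N, b N) ≠ ∞ := by
    rw [← ENNReal.ofReal_tsum_of_nonneg (fun N => by positivity) hsum2]
    exact ENNReal.ofReal_ne_top
  set g : ℕ → ℝ≥0∞ := fun N => if N < N₁ then 1 else 0 with hg_def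
  have hg_ne : (∑' N, g N) ≠ ∞ := by
    have : (∑' N, g N) = ∑ N ∈ Finset.range N₁, g N := by
      apply tsum_eq_sum
      intro c hc
      have hc' : ¬ c < N₁ := by simpa [Finset.mem_range] using hc
      simp [hg_def, hc']
    rw [this]
    exact (ENNReal.sum_lt_top.mpr fun i _ => by
      simp only [hg_def]; split <;> simp).ne
  have hle : ∀ N, a N ≤ g N + b N := by
    intro N
    by_cases h : N < N₁
    · calc a N ≤ 1 := ha_le_one N
        _ = g N := by simp [hg_def, h]
        _ ≤ g N + b N := le_self_add
    · calc a N ≤ b N := hbound N (not_lt.mp h)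
        _ ≤ g N + b N := le_add_self
  have htsum : (∑' N, a N) ≤ (∑' N, g N) + (∑' N, b N) := by
    rw [← ENNReal.tsum_add]
    exact ENNReal.tsum_le_tsum hle
  have : (∑' N, a N) ≠ ∞ :=
    ne_top_of_le_ne_top (ENNReal.add_ne_top.mpr ⟨hg_ne, hb_ne⟩) htsum
  exact this
end

section
/- Let $\chi\ge 1$, $\delta>0$, and let $Y_0$ be an $\mathbb{N}^+$-valued random variable with $\P(Y_0=k)=c_{\delta}e^{-\delta k}$, $k\ge 1$, where $c_{\delta}$ is the normalizing constant. Define $\alpha(k)=e^{-1/k^{\chi}}$. Then for every $0<\theta<\frac{1}{2\chi}$ we have $\lim_{n\to\infty}\mathbb{E}[\alpha(Y_0)^n]^{1/n^{\theta}}=0$. -/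
/-!
Split `E[α(Y₀)^n]` at `m = ⌊n^{1/(2χ)}⌋`. On `{Y₀ ≤ m}` the integrand is at most
`α(m)^n = exp(-n/m^χ) ≤ exp(-√n) ≤ exp(-n^{1/(2χ)})` (this is where `χ ≥ 1` enters), and the
geometric tail gives `P(Y₀ > m) ≤ c e^{-δ(m+1)}/(1 - e^{-δ}) ≤ C e^{-δ n^{1/(2χ)}}`. Hence
`E[α(Y₀)^n] ≤ K exp(-ε n^{1/(2χ)})`, and its `n^θ`-th root is at most
`K^{1/n^θ} exp(-ε n^{1/(2χ) - θ}) → 0`.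
-/

open MeasureTheory Filter Real Topology

theorem tendsto_rpow_one_div_rpow_of_le_mul_exp_neg_rpow {a : ℕ → ℝ} {K ε b θ : ℝ}
    (hK : 0 < K) (hε : 0 < ε) (hθ : 0 < θ) (hθb : θ < b) (ha0 : ∀ n, 0 ≤ a n)
    (ha : ∀ n : ℕ, 1 ≤ n → a n ≤ K * exp (-(ε * (n : ℝ) ^ b))) :
    Tendsto (fun n : ℕ => a n ^ (1 / (n : ℝ) ^ θ)) atTop (𝓝 0) := by
  have hexp : Tendsto (fun n : ℕ => 1 / (n : ℝ) ^ θ) atTop (𝓝 0) := by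
    simpa only [one_div, Pi.inv_def, Function.comp_def] using
      ((tendsto_rpow_atTop hθ).comp tendsto_natCast_atTop_atTop).inv_tendsto_atTop
  have hKpow : Tendsto (fun n : ℕ => K ^ (1 / (n : ℝ) ^ θ)) atTop (𝓝 1) := by
    simpa using tendsto_const_nhds.rpow hexp (Or.inl hK.ne')
  have hdecay : Tendsto (fun n : ℕ => exp (-(ε * (n : ℝ) ^ (b - θ)))) atTop (𝓝 0) := by
    refine tendsto_exp_atBot.comp (tendsto_neg_atTop_atBot.comp ?_)
    exact ((tendsto_rpow_atTop (sub_pos.2 hθb)).comp tendsto_natCast_atTop_atTop).const_mul_atTop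
      hε
  refine tendsto_of_tendsto_of_tendsto_of_le_of_le' tendsto_const_nhds
    (by simpa only [mul_zero] using hKpow.mul hdecay)
    (Eventually.of_forall fun n => rpow_nonneg (ha0 n) _) ?_
  filter_upwards [eventually_ge_atTop 1] with n hn
  have hn0 : (0 : ℝ) < n := by exact_mod_cast hn
  calc a n ^ (1 / (n : ℝ) ^ θ)
      ≤ (K * exp (-(ε * (n : ℝ) ^ b))) ^ (1 / (n : ℝ) ^ θ) :=
        rpow_le_rpow (ha0 n) (ha n hn) (by positivity)
    _ = K ^ (1 / (n : ℝ) ^ θ) * exp (-(ε * (n : ℝ) ^ (b - θ))) := by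
        rw [mul_rpow hK.le (exp_nonneg _), ← exp_mul, rpow_sub hn0]
        congr 2
        ring

theorem measureReal_lt_le_of_geometric_law {Ω : Type*} [MeasurableSpace Ω] (μ : Measure Ω)
    (Y : Ω → ℕ) {δ c : ℝ} (hδ : 0 < δ) (hc : 0 ≤ c)
    (hlaw : ∀ k : ℕ, 1 ≤ k → μ {ω | Y ω = k} = ENNReal.ofReal (c * exp (-δ * k))) (m : ℕ) :
    μ.real {ω | m < Y ω} ≤ c / (1 - exp (-δ)) * exp (-δ * (m + 1)) := by
  have hr0 : 0 ≤ exp (-δ) := exp_nonneg _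
  have hr1 : exp (-δ) < 1 := exp_lt_one_iff.2 (neg_lt_zero.2 hδ)
  have hterm : ∀ k : ℕ, μ {ω | Y ω = m + 1 + k}
      = ENNReal.ofReal (c * exp (-δ * (m + 1)) * exp (-δ) ^ k) := fun k => by
    rw [hlaw _ (by omega), ← exp_nat_mul, mul_assoc, ← exp_add]
    push_cast
    congr 3
    ring
  have hsum : HasSum (fun k : ℕ => c * exp (-δ * (m + 1)) * exp (-δ) ^ k)
      (c * exp (-δ * (m + 1)) * (1 - exp (-δ))⁻¹) :=
    (hasSum_geometric_of_lt_one hr0 hr1).mul_left _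
  rw [div_mul_eq_mul_div, div_eq_mul_inv]
  refine ENNReal.toReal_le_of_le_ofReal (hsum.nonneg fun k => by positivity) ?_
  calc μ {ω | m < Y ω} ≤ μ (⋃ k : ℕ, {ω | Y ω = m + 1 + k}) :=
        measure_mono fun ω (hω : m < Y ω) =>
          Set.mem_iUnion.2 ⟨Y ω - (m + 1), by simp only [Set.mem_ofPred_eq]; omega⟩
    _ ≤ ∑' k : ℕ, μ {ω | Y ω = m + 1 + k} := measure_iUnion_le _
    _ = ENNReal.ofReal (c * exp (-δ * (m + 1)) * (1 - exp (-δ))⁻¹) := by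
        rw [tsum_congr hterm, ← ENNReal.ofReal_tsum_of_nonneg (fun k => by positivity)
          hsum.summable, hsum.tsum_eq]

theorem integral_le_add_measureReal_of_le {Ω : Type*} [MeasurableSpace Ω] {μ : Measure Ω}
    [IsProbabilityMeasure μ] {h : Ω → ℝ} {S : Set Ω} {a : ℝ} (hh : Integrable h μ)
    (hS : MeasurableSet S) (ha : 0 ≤ a) (hle : ∀ ω ∉ S, h ω ≤ a) (hle_one : ∀ ω ∈ S, h ω ≤ 1) :
    ∫ ω, h ω ∂μ ≤ a + μ.real S := by
  have hpt : ∀ ω, h ω ≤ a + S.indicator 1 ω := fun ω => by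
    by_cases hω : ω ∈ S
    · simpa [hω] using (hle_one ω hω).trans (le_add_of_nonneg_left ha)
    · simpa [hω] using hle ω hω
  have hind : Integrable (S.indicator 1) μ := (integrable_const (1 : ℝ)).indicator hS
  calc ∫ ω, h ω ∂μ ≤ ∫ ω, (a + S.indicator 1 ω) ∂μ :=
        integral_mono hh ((integrable_const a).add hind) hpt
    _ = a + μ.real S := by
        rw [integral_add (integrable_const a) hind, integral_indicator_one hS, integral_const]
        simp

theorem exp_neg_one_div_rpow_pow_le_one (χ : ℝ) (k n : ℕ) : exp (-1 / (k : ℝ) ^ χ) ^ n ≤ 1 :=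
  pow_le_one₀ (exp_nonneg _) <| exp_le_one_iff.2 <|
    div_nonpos_of_nonpos_of_nonneg (by norm_num) (rpow_nonneg k.cast_nonneg _)

theorem exp_neg_one_div_rpow_pow_le {χ : ℝ} (hχ : 0 ≤ χ) {k m : ℕ} (hk : 1 ≤ k) (hkm : k ≤ m)
    (n : ℕ) : exp (-1 / (k : ℝ) ^ χ) ^ n ≤ exp (-(n / (m : ℝ) ^ χ)) := by
  have hk0 : (0 : ℝ) < k := by exact_mod_cast hk
  rw [← exp_nat_mul, exp_le_exp, mul_div, mul_neg_one, neg_div, neg_le_neg_iff]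
  gcongr

theorem rpow_one_div_two_mul_le_div_floor_rpow {χ : ℝ} (hχ : 1 ≤ χ) {x : ℝ} (hx : 1 ≤ x) :
    x ^ (1 / (2 * χ)) ≤ x / (⌊x ^ (1 / (2 * χ))⌋₊ : ℝ) ^ χ := by
  set b := 1 / (2 * χ)
  have hb : 0 < b := by positivity
  have hbχ : b * χ = 1 / 2 := by simp only [b]; field_simp
  have hb_half : b ≤ 1 / 2 := by
    rw [← hbχ]; exact le_mul_of_one_le_right hb.le hχ
  have hm : (1 : ℝ) ≤ ⌊x ^ b⌋₊ := by
    exact_mod_cast (Nat.one_le_floor_iff _).2 (one_le_rpow hx hb.le)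
  rw [le_div_iff₀ (by positivity)]
  calc x ^ b * (⌊x ^ b⌋₊ : ℝ) ^ χ ≤ x ^ b * (x ^ b) ^ χ := by
        gcongr
        exact Nat.floor_le (by positivity)
    _ = x ^ (b + 1 / 2) := by rw [← rpow_mul (by positivity), hbχ, rpow_add (by positivity)]
    _ ≤ x ^ (1 : ℝ) := rpow_le_rpow_of_exponent_le hx (by linarith)
    _ = x := rpow_one x

theorem integral_exp_neg_one_div_rpow_pow_le {Ω : Type*} [MeasurableSpace Ω] (ℙ : Measure Ω)
    [IsProbabilityMeasure ℙ] (Y₀ : Ω → ℕ) (hYmeas : Measurable Y₀) (hYpos : ∀ ω, 1 ≤ Y₀ ω)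
    {χ δ c : ℝ} (hχ : 1 ≤ χ) (hδ : 0 < δ) (hc : 0 ≤ c)
    (hlaw : ∀ k : ℕ, 1 ≤ k → ℙ {ω | Y₀ ω = k} = ENNReal.ofReal (c * exp (-δ * k)))
    {n : ℕ} (hn : 1 ≤ n) :
    ∫ ω, exp (-1 / (Y₀ ω : ℝ) ^ χ) ^ n ∂ℙ
      ≤ (1 + c / (1 - exp (-δ))) * exp (-(min 1 δ * (n : ℝ) ^ (1 / (2 * χ)))) := by
  set x := (n : ℝ) ^ (1 / (2 * χ))
  set m := ⌊x⌋₊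
  have hn1 : (1 : ℝ) ≤ n := by exact_mod_cast hn
  have hint : Integrable (fun ω => exp (-1 / (Y₀ ω : ℝ) ^ χ) ^ n) ℙ :=
    .of_mem_Icc 0 1 ((measurable_from_nat (f := fun k : ℕ => exp (-1 / (k : ℝ) ^ χ) ^ n)).comp
      hYmeas).aemeasurable <| ae_of_all _ fun ω =>
      ⟨by positivity, exp_neg_one_div_rpow_pow_le_one χ _ n⟩
  have hsplit := integral_le_add_measureReal_of_le hint (measurableSet_lt measurable_const hYmeas)
    (exp_nonneg (-(n / (m : ℝ) ^ χ)))
    (fun ω hω => exp_neg_one_div_rpow_pow_le (by linarith) (hYpos ω) (not_lt.1 hω) n)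
    (fun ω _ => exp_neg_one_div_rpow_pow_le_one χ _ n)
  have hhead : exp (-(n / (m : ℝ) ^ χ)) ≤ exp (-(min 1 δ * x)) := by
    rw [exp_le_exp, neg_le_neg_iff]
    calc min 1 δ * x ≤ 1 * x := by gcongr; exact min_le_left _ _
      _ = x := one_mul x
      _ ≤ n / (m : ℝ) ^ χ := rpow_one_div_two_mul_le_div_floor_rpow hχ hn1
  have htail : ℙ.real {ω | m < Y₀ ω} ≤ c / (1 - exp (-δ)) * exp (-(min 1 δ * x)) := by
    refine (measureReal_lt_le_of_geometric_law ℙ Y₀ hδ hc hlaw m).trans ?_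
    have hr : exp (-δ) < 1 := exp_lt_one_iff.2 (neg_lt_zero.2 hδ)
    have hexp : exp (-δ * (m + 1)) ≤ exp (-(min 1 δ * x)) := by
      rw [exp_le_exp, neg_mul, neg_le_neg_iff]
      calc min 1 δ * x ≤ δ * x := by gcongr; exact min_le_right _ _
        _ ≤ δ * (m + 1) := by gcongr; exact (Nat.lt_floor_add_one x).le
    exact mul_le_mul_of_nonneg_left hexp (div_nonneg hc (by linarith))
  linarith

/-- Remark 2.7 of the paper: for a geometrically distributed environment value `Y₀`
on `ℕ⁺` and `α(k) = e^{-1/k^χ}`, the smallness condition holds for any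
`0 < θ < 1/(2χ)`. -/
theorem smallness_example_geometric
    {Ω : Type*} [MeasurableSpace Ω] (ℙ : Measure Ω) [IsProbabilityMeasure ℙ]
    (Y₀ : Ω → ℕ) (hYmeas : Measurable Y₀) (hYpos : ∀ ω, 1 ≤ Y₀ ω)
    (χ : ℝ) (hχ : 1 ≤ χ) (δ : ℝ) (hδ : 0 < δ) (c : ℝ) (hc : 0 < c)
    (hlaw : ∀ k : ℕ, 1 ≤ k →
      ℙ {ω | Y₀ ω = k} = ENNReal.ofReal (c * Real.exp (-δ * k)))
    (θ : ℝ) (hθ0 : 0 < θ) (hθ1 : θ < 1 / (2 * χ)) :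
    Filter.Tendsto
      (fun n : ℕ =>
        (∫ ω, (Real.exp (-1 / (Y₀ ω : ℝ) ^ χ)) ^ n ∂ℙ) ^ ((1 : ℝ) / (n : ℝ) ^ θ))
      Filter.atTop (nhds 0) := by
  have hr : exp (-δ) < 1 := exp_lt_one_iff.2 (neg_lt_zero.2 hδ)
  have hK : 0 < 1 + c / (1 - exp (-δ)) := by
    have := div_pos hc (sub_pos.2 hr)
    linarith
  exact tendsto_rpow_one_div_rpow_of_le_mul_exp_neg_rpow hK (lt_min one_pos hδ) hθ0 hθ1
    (fun n => integral_nonneg fun ω => by positivity)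
    (fun n hn => integral_exp_neg_one_div_rpow_pow_le ℙ Y₀ hYmeas hYpos hχ hδ hc.le hlaw hn)
end
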